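/- arXiv:2102.00494 — 8 statements merged into one kernel-verified Lean document; each statement's English description precedes it below -/
import Mathlib

section
/- S_D equals the set of monomials of the form m′ + b, where b is a δ-monomial with deg b = r and b_δ = r−w, and m′ is a (δ+1)-monomial with 1 ≤ deg m′ ≤ s−r (the sum of exponent vectors corresponding to the product of monomials). -/
/-!
A border monomial `m = x_α·t` of degree `> r` comes from some `t ∈ O` of degree `≥ r`, so `t` is a
δ-monomial with `t_δ ≤ r - w - 1` and hence `m_δ ≤ r - w`; since `m ∉ O`, also `m_δ ≥ r - w`.
Conversely `x_δ·(m / x_δ)` exhibits every such `m` as a border monomial. So `S_D` consists of the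
δ-monomials of degree in `(r, s]` with `m_δ = r - w`, and such an `m` splits as `m'·b` by moving
`w` units of its exponents beyond `x_δ` into `b`.
-/

open MvPolynomial
open scoped Classical

noncomputable section

/-- Total degree of an exponent vector `m : Fin n →₀ ℕ`. -/
def mdeg {n : ℕ} (m : Fin n →₀ ℕ) : ℕ := ∑ k, m k

/-- `m` is a δ-monomial: all exponents of variables strictly before `δ` vanish. -/
def IsDeltaMon {n : ℕ} (δ : Fin n) (m : Fin n →₀ ℕ) : Prop := ∀ k < δ, m k = 0

/-- `m` is a (δ+1)-monomial: all exponents of variables up to and including `δ` vanish. -/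
def IsSuccDeltaMon {n : ℕ} (δ : Fin n) (m : Fin n →₀ ℕ) : Prop := ∀ k ≤ δ, m k = 0

/-- The order ideal `O(n,r,s,δ,w)`. -/
def OIdeal {n : ℕ} (r s w : ℕ) (δ : Fin n) : Set (Fin n →₀ ℕ) :=
  {m | mdeg m < r ∨ (IsDeltaMon δ m ∧ r ≤ mdeg m ∧ mdeg m ≤ s ∧ m δ + w + 1 ≤ r)}

/-- The border `∂O`. -/
def Border {n : ℕ} (r s w : ℕ) (δ : Fin n) : Set (Fin n →₀ ℕ) :=
  {m | m ∉ OIdeal r s w δ ∧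
    ∃ (α : Fin n) (t : Fin n →₀ ℕ), t ∈ OIdeal r s w δ ∧ m = Finsupp.single α 1 + t}

/-- The set `S_D` of "diagonal" border monomials. -/
def SD {n : ℕ} (r s w : ℕ) (δ : Fin n) : Set (Fin n →₀ ℕ) :=
  {m | m ∈ Border r s w δ ∧ IsDeltaMon δ m ∧ r + 1 ≤ mdeg m ∧ mdeg m ≤ s}

/-- The set `S_L` of "leading" monomials. -/
def SL {n : ℕ} (r w : ℕ) (δ : Fin n) : Set (Fin n →₀ ℕ) :=
  {m | IsDeltaMon δ m ∧ mdeg m = r ∧ r - w ≤ m δ}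

/-- `tar = {m ∈ O : r ≤ deg m ≤ s}`. -/
def Tar {n : ℕ} (r s w : ℕ) (δ : Fin n) : Set (Fin n →₀ ℕ) :=
  {m | m ∈ OIdeal r s w δ ∧ r ≤ mdeg m ∧ mdeg m ≤ s}

/-- `tar' = {m ∈ tar : deg m ≤ s−1}`. -/
def Tar' {n : ℕ} (r s w : ℕ) (δ : Fin n) : Set (Fin n →₀ ℕ) :=
  {m | m ∈ Tar r s w δ ∧ mdeg m ≤ s - 1}

/-- `tar'' = {m ∈ tar' : m_{δ+1} ≥ w}` (`δ'` is the index of `x_{δ+1}`). -/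
def Tar'' {n : ℕ} (r s w : ℕ) (δ δ' : Fin n) : Set (Fin n →₀ ℕ) :=
  {m | m ∈ Tar' r s w δ ∧ w ≤ m δ'}

/-- `trailmon = {m ∈ O : deg m = s}`. -/
def Trail {n : ℕ} (r s w : ℕ) (δ : Fin n) : Set (Fin n →₀ ℕ) :=
  {m | m ∈ OIdeal r s w δ ∧ mdeg m = s}

/-- `leadmon = {m : deg m = r, m ∉ O}`. -/
def Lead {n : ℕ} (r s w : ℕ) (δ : Fin n) : Set (Fin n →₀ ℕ) :=
  {m | mdeg m = r ∧ m ∉ OIdeal r s w δ}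

/-- `Seg_a`: δ-monomials of degree `r` with `x_δ`-exponent `r − a`. -/
def SegA {n : ℕ} (r a : ℕ) (δ : Fin n) : Set (Fin n →₀ ℕ) :=
  {b | IsDeltaMon δ b ∧ mdeg b = r ∧ b δ = r - a}

/-- The monomial `x_δ^{r−a}·x_{δ+1}^{a}` (`δ'` is the index of `x_{δ+1}`). -/
def bstar {n : ℕ} (r a : ℕ) (δ δ' : Fin n) : Fin n →₀ ℕ :=
  Finsupp.single δ (r - a) + Finsupp.single δ' a

/-- Truncation: sum of homogeneous components of degree `0` through `s`. -/
def truncLE {n : ℕ} {R : Type*} [CommRing R] (s : ℕ) (P : MvPolynomial (Fin n) R) :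
    MvPolynomial (Fin n) R :=
  ∑ m ∈ P.support.filter (fun m => mdeg m ≤ s), monomial m (coeff m P)

/-- `optX R none = 1 = X₀`, `optX R (some a) = X a`. -/
def optX {n : ℕ} (R : Type*) [CommRing R] : Option (Fin n) → MvPolynomial (Fin n) R
  | none => 1
  | some a => X a

/-- `optE none = 0 = e₀`, `optE (some a) = e_a`. -/
def optE {n : ℕ} : Option (Fin n) → (Fin n →₀ ℕ)
  | none => 0
  | some a => Finsupp.single a 1

/-- The reduction operator determined by a target function `UpsD` on `S_D`. -/
def redFn {n : ℕ} {R : Type*} [CommRing R] (r s w : ℕ) (δ : Fin n)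
    (UpsD : (Fin n →₀ ℕ) → MvPolynomial (Fin n) R) (P : MvPolynomial (Fin n) R) :
    MvPolynomial (Fin n) R :=
  (∑ m ∈ P.support.filter (fun m => m ∈ Tar r s w δ), monomial m (coeff m P)) -
  ∑ m ∈ P.support.filter (fun m => m ∈ SD r s w δ), coeff m P • UpsD m

/-- The polynomial ring over `K` in the distinguished indeterminates `C_{(t,b)}`
and the modification indeterminates `θ_m`. -/
abbrev BigA (K : Type*) [Field K] {n : ℕ} (r s w : ℕ) (δ δ' : Fin n) : Type _ :=
  MvPolynomial ((↥(Trail r s w δ) × ↥(Lead r s w δ)) ⊕ ↥(Tar'' r s w δ δ')) K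

/-- The generic linear combination `N_b = Σ_t C_{(t,b)}·X^t` for `b ∈ leadmon`, `0` otherwise. -/
def NB (K : Type*) [Field K] {n : ℕ} (r s w : ℕ) (δ δ' : Fin n) (b : Fin n →₀ ℕ) :
    MvPolynomial (Fin n) (BigA K r s w δ δ') :=
  if hb : b ∈ Lead r s w δ then
    ∑ᶠ t : ↥(Trail r s w δ),
      monomial (t : Fin n →₀ ℕ)
        (MvPolynomial.X (Sum.inl (t, ⟨b, hb⟩)) : BigA K r s w δ δ')
  else 0

lemma mdeg_eq_degree {n : ℕ} (m : Fin n →₀ ℕ) : mdeg m = m.degree :=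
  (Finsupp.degree_eq_sum m).symm

lemma mdeg_add {n : ℕ} (a b : Fin n →₀ ℕ) : mdeg (a + b) = mdeg a + mdeg b := by
  simp only [mdeg_eq_degree, map_add]

lemma mdeg_single {n : ℕ} (k : Fin n) (v : ℕ) : mdeg (Finsupp.single k v) = v := by
  rw [mdeg_eq_degree, Finsupp.degree_single]

section DeltaMonomials

variable {n : ℕ} {δ : Fin n} {a m : Fin n →₀ ℕ}

lemma IsDeltaMon.add (ha : IsDeltaMon δ a) (hm : IsDeltaMon δ m) : IsDeltaMon δ (a + m) :=
  fun k hk => by simp [ha k hk, hm k hk]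

lemma IsDeltaMon.mono (hm : IsDeltaMon δ m) (hle : a ≤ m) : IsDeltaMon δ a :=
  fun k hk => Nat.eq_zero_of_le_zero (hm k hk ▸ hle k)

lemma isDeltaMon_single (v : ℕ) : IsDeltaMon δ (Finsupp.single δ v) :=
  fun _ hk => Finsupp.single_eq_of_ne hk.ne

lemma IsSuccDeltaMon.isDeltaMon (hm : IsSuccDeltaMon δ m) : IsDeltaMon δ m :=
  fun k hk => hm k hk.le

lemma IsSuccDeltaMon.mono (hm : IsSuccDeltaMon δ m) (hle : a ≤ m) : IsSuccDeltaMon δ a :=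
  fun k hk => Nat.eq_zero_of_le_zero (hm k hk ▸ hle k)

lemma isSuccDeltaMon_filter (m : Fin n →₀ ℕ) : IsSuccDeltaMon δ (m.filter (δ < ·)) :=
  fun _ hk => Finsupp.filter_apply_neg _ _ hk.not_gt

lemma IsDeltaMon.single_add_filter (hm : IsDeltaMon δ m) :
    Finsupp.single δ (m δ) + m.filter (δ < ·) = m := by
  ext k
  rcases lt_trichotomy k δ with hk | rfl | hk
  · simp [Finsupp.single_eq_of_ne hk.ne, hk.not_gt, hm k hk]
  · simp
  · simp [Finsupp.single_eq_of_ne hk.ne', hk]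

/-- Peel `w` units off the part of `m` beyond `x_δ` and attach them to the `x_δ`-power. -/
lemma IsDeltaMon.exists_eq_add (hm : IsDeltaMon δ m) {w : ℕ} (hw : w ≤ mdeg m - m δ) :
    ∃ b m' : Fin n →₀ ℕ, IsDeltaMon δ b ∧ mdeg b = m δ + w ∧ b δ = m δ ∧
      IsSuccDeltaMon δ m' ∧ m = m' + b := by
  set tail := m.filter (δ < ·)
  have htail : IsSuccDeltaMon δ tail := isSuccDeltaMon_filter m
  have hdeg : mdeg m = m δ + mdeg tail := by
    conv_lhs => rw [← hm.single_add_filter]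
    rw [mdeg_add, mdeg_single]
  obtain ⟨c, hc, hcdeg⟩ := tail.exists_le_degree_eq w (by rw [← mdeg_eq_degree]; omega)
  refine ⟨Finsupp.single δ (m δ) + c, tail - c, (isDeltaMon_single _).add
    ((htail.mono hc).isDeltaMon), ?_, ?_, htail.mono tsub_le_self, ?_⟩
  · rw [mdeg_add, mdeg_single, mdeg_eq_degree, hcdeg]
  · simp [htail.mono hc δ le_rfl]
  · rw [add_comm (Finsupp.single _ _), ← add_assoc, tsub_add_cancel_of_le hc,
      add_comm, hm.single_add_filter]

end DeltaMonomials

section Border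

variable {n r s w : ℕ} {δ : Fin n} {m : Fin n →₀ ℕ}

lemma apply_add_le_of_mem_border (hm : m ∈ Border r s w δ) (hdeg : r < mdeg m) :
    m δ + w ≤ r := by
  obtain ⟨-, α, t, ht, rfl⟩ := hm
  rw [mdeg_add, mdeg_single] at hdeg
  have htδ : t δ + w + 1 ≤ r := by
    rcases ht with ht | ⟨-, -, -, ht⟩
    · omega
    · exact ht
  have hsingle : Finsupp.single α 1 δ ≤ 1 := by
    rw [Finsupp.single_apply]; split_ifs <;> omega
  simp only [Finsupp.add_apply]
  omega

lemma mem_border_of_apply_add_eq (hm : IsDeltaMon δ m) (hr : r < mdeg m) (hs : mdeg m ≤ s)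
    (hδ : m δ + w = r) (hw : w < r) : m ∈ Border r s w δ := by
  have hle : Finsupp.single δ 1 ≤ m := Finsupp.single_le_iff.mpr (by omega)
  have hsplit : Finsupp.single δ 1 + (m - Finsupp.single δ 1) = m := add_tsub_cancel_of_le hle
  have hdeg : mdeg m = 1 + mdeg (m - Finsupp.single δ 1) := by
    conv_lhs => rw [← hsplit]
    rw [mdeg_add, mdeg_single]
  refine ⟨?_, δ, m - Finsupp.single δ 1, Or.inr ⟨hm.mono tsub_le_self, by omega, by omega, ?_⟩,
    hsplit.symm⟩
  · rintro (h | ⟨-, -, -, h⟩) <;> omega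
  · simp only [Finsupp.tsub_apply, Finsupp.single_eq_same]
    omega

lemma mem_SD_iff (hw : w < r) :
    m ∈ SD r s w δ ↔ IsDeltaMon δ m ∧ r < mdeg m ∧ mdeg m ≤ s ∧ m δ + w = r := by
  constructor
  · rintro ⟨hborder, hm, hr, hs⟩
    have hnotO : r < m δ + w + 1 := by
      by_contra h
      exact hborder.1 (Or.inr ⟨hm, by omega, hs, by omega⟩)
    have := apply_add_le_of_mem_border hborder hr
    exact ⟨hm, hr, hs, by omega⟩
  · rintro ⟨hm, hr, hs, hδ⟩
    exact ⟨mem_border_of_apply_add_eq hm hr hs hδ hw, hm, hr, hs⟩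

end Border

theorem statement1_general (n r s w : ℕ) (δ : Fin n) (hw : w + 1 ≤ r) :
    SD r s w δ =
      {m : Fin n →₀ ℕ | ∃ b m' : Fin n →₀ ℕ,
        IsDeltaMon δ b ∧ mdeg b = r ∧ b δ = r - w ∧
        IsSuccDeltaMon δ m' ∧ 1 ≤ mdeg m' ∧ mdeg m' ≤ s - r ∧ m = m' + b} := by
  ext m
  rw [Set.mem_ofPred_eq, mem_SD_iff hw]
  constructor
  · rintro ⟨hm, hr, hs, hδ⟩
    obtain ⟨b, m', hb, hbdeg, hbδ, hm', rfl⟩ := hm.exists_eq_add (w := w) (by omega)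
    rw [mdeg_add] at hr hs
    exact ⟨b, m', hb, by omega, by omega, hm', by omega, by omega, rfl⟩
  · rintro ⟨b, m', hb, hbdeg, hbδ, hm', hm'pos, hm's, rfl⟩
    rw [mdeg_add]
    refine ⟨hm'.isDeltaMon.add hb, by omega, by omega, ?_⟩
    simp only [Finsupp.add_apply, hm' δ le_rfl, hbδ]
    omega

/-- `S_D` equals the set of monomials `m′ + b` with `b` a δ-monomial of
degree `r` with `b_δ = r−w`, and `m′` a (δ+1)-monomial with `1 ≤ deg m′ ≤ s−r`. -/
theorem statement1 (n r s w : ℕ) (δ : Fin n) (hn : 2 ≤ n) (hr : 2 ≤ r) (hrs : r < s)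
    (hδ : (δ : ℕ) + 1 < n) (hw : w + 1 ≤ r) :
    SD r s w δ =
      {m : Fin n →₀ ℕ | ∃ b m' : Fin n →₀ ℕ,
        IsDeltaMon δ b ∧ mdeg b = r ∧ b δ = r - w ∧
        IsSuccDeltaMon δ m' ∧ 1 ≤ mdeg m' ∧ mdeg m' ≤ s - r ∧ m = m' + b} :=
  statement1_general n r s w δ hw
end
end

section
/- If m ∈ O and m′ ∈ ℕ^n satisfies m′_k ≤ m_k for all 1 ≤ k ≤ n, then m′ ∈ O; that is, O(n,r,s,δ,w) is closed under divisibility of monomials (it is an order ideal). -/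
open MvPolynomial
open scoped Classical

noncomputable section

/-- `O(n,r,s,δ,w)` is closed under divisibility of monomials. -/
theorem statement3 (n r s w : ℕ) (δ : Fin n) (hn : 2 ≤ n) (hr : 2 ≤ r) (hrs : r < s)
    (hδ : (δ : ℕ) + 1 < n) (hw : w + 1 ≤ r)
    (m m' : Fin n →₀ ℕ) (hm : m ∈ OIdeal r s w δ) (hle : ∀ k, m' k ≤ m k) :
    m' ∈ OIdeal r s w δ := by
  have hdeg : mdeg m' ≤ mdeg m := Finset.sum_le_sum fun k _ => hle k
  by_cases h : mdeg m' < r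
  · exact Or.inl h
  · rcases hm with hm | ⟨hd, _, hs, hδ2⟩
    · exact absurd (lt_of_le_of_lt hdeg hm) h
    · exact Or.inr ⟨fun k hk => Nat.le_zero.mp ((hle k).trans (hd k hk).le),
        le_of_not_gt h, hdeg.trans hs,
        le_trans (by have := hle δ; omega) hδ2⟩
end
end

section
/- Let 0 ≤ s₀ ≤ s₁ ≤ w, let S′ be the set of δ-monomials m with deg m = r and r−s₁ ≤ m_δ ≤ r−s₀, and let b₀ = (r−s₀)·e_δ + s₀·e_{δ+1}. Then for every m ∈ S′ with m ≠ b₀ there exist an integer z ≥ 0, a sequence b₀ = m₀, m₁, …, m_z, m_{z+1} = m of elements of S′, and indices α_q, β_q with δ ≤ α_q ≤ n and δ ≤ β_q ≤ n (for 0 ≤ q ≤ z) such that e_{α_q} + m_q = e_{β_q} + m_{q+1} for every 0 ≤ q ≤ z. -/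
open MvPolynomial
open scoped Classical

noncomputable section

namespace Stmt4Aux

variable {n : ℕ}

lemma mdeg_add (a b : Fin n →₀ ℕ) : mdeg (a + b) = mdeg a + mdeg b := by
  simp [mdeg, Finset.sum_add_distrib]

lemma mdeg_single (k : Fin n) (v : ℕ) : mdeg (Finsupp.single k v) = v := by
  simp [mdeg, Finsupp.single_apply]

lemma pair_le (m : Fin n →₀ ℕ) (δ δ' : Fin n) (h : δ ≠ δ') :
    m δ + m δ' ≤ mdeg m := by
  rw [mdeg, ← Finset.sum_pair h]
  exact Finset.sum_le_sum_of_subset (Finset.subset_univ _)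

lemma exists_pos1 (m : Fin n →₀ ℕ) (δ : Fin n) (h : m δ < mdeg m) :
    ∃ k, k ≠ δ ∧ 0 < m k := by
  by_contra hc
  push_neg at hc
  have : ∑ k ∈ ({δ} : Finset (Fin n)), m k = mdeg m := by
    refine Finset.sum_subset (Finset.subset_univ _) (fun x _ hx => ?_)
    have hxδ : x ≠ δ := by simpa using hx
    have := hc x hxδ
    omega
  simp at this
  omega

lemma exists_pos2 (m : Fin n →₀ ℕ) (δ δ' : Fin n) (hne : δ ≠ δ')
    (h : m δ + m δ' < mdeg m) : ∃ k, k ≠ δ ∧ k ≠ δ' ∧ 0 < m k := by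
  by_contra hc
  push_neg at hc
  have : ∑ k ∈ ({δ, δ'} : Finset (Fin n)), m k = mdeg m := by
    refine Finset.sum_subset (Finset.subset_univ _) (fun x _ hx => ?_)
    simp only [Finset.mem_insert, Finset.mem_singleton] at hx
    push_neg at hx
    have := hc x hx.1 hx.2
    omega
  rw [Finset.sum_pair hne] at this
  omega

lemma swap_eq (m : Fin n →₀ ℕ) (k t : Fin n) (hk : 0 < m k) :
    Finsupp.single k 1 + (m + Finsupp.single t 1 - Finsupp.single k 1)
      = Finsupp.single t 1 + m := by
  ext j
  simp only [Finsupp.add_apply, Finsupp.tsub_apply, Finsupp.single_apply]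
  by_cases h1 : k = j
  · subst h1
    by_cases h2 : t = k <;> simp [h2] <;> omega
  · by_cases h2 : t = j <;> simp [h1, h2] <;> omega

def Inv (r s₀ s₁ : ℕ) (δ : Fin n) (m : Fin n →₀ ℕ) : Prop :=
  IsDeltaMon δ m ∧ mdeg m = r ∧ r - s₁ ≤ m δ ∧ m δ ≤ r - s₀

def Reach (r s₀ s₁ : ℕ) (δ : Fin n) (b₀ m : Fin n →₀ ℕ) : Prop :=
  ∃ (z : ℕ) (c : ℕ → Fin n →₀ ℕ) (α β : ℕ → Fin n),
    c 0 = b₀ ∧ c (z + 1) = m ∧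
    (∀ q ≤ z + 1, Inv r s₀ s₁ δ (c q)) ∧
    (∀ q ≤ z, δ ≤ α q ∧ δ ≤ β q ∧
      Finsupp.single (α q) 1 + c q = Finsupp.single (β q) 1 + c (q + 1))

lemma reach_refl {r s₀ s₁ : ℕ} {δ : Fin n} {b₀ : Fin n →₀ ℕ}
    (hb : Inv r s₀ s₁ δ b₀) : Reach r s₀ s₁ δ b₀ b₀ :=
  ⟨0, fun _ => b₀, fun _ => δ, fun _ => δ, rfl, rfl, fun _ _ => hb,
    fun _ _ => ⟨le_rfl, le_rfl, rfl⟩⟩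

lemma reach_extend {r s₀ s₁ : ℕ} {δ : Fin n} {b₀ m' m : Fin n →₀ ℕ}
    (h : Reach r s₀ s₁ δ b₀ m') (hm : Inv r s₀ s₁ δ m) (a b : Fin n)
    (ha : δ ≤ a) (hb : δ ≤ b)
    (hstep : Finsupp.single a 1 + m' = Finsupp.single b 1 + m) :
    Reach r s₀ s₁ δ b₀ m := by
  obtain ⟨z, c, α, β, h0, h1, hinv, hstp⟩ := h
  refine ⟨z + 1, fun q => if q ≤ z + 1 then c q else m,
    fun q => if q ≤ z then α q else a, fun q => if q ≤ z then β q else b,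
    ?_, ?_, ?_, ?_⟩
  · simp [h0]
  · have hlt : ¬ (z + 1 + 1 ≤ z + 1) := by omega
    simp [hlt]
  · intro q hq
    by_cases h' : q ≤ z + 1
    · simpa [h'] using hinv q h'
    · simpa [h'] using hm
  · intro q hq
    by_cases h' : q ≤ z
    · have h2 : q + 1 ≤ z + 1 := by omega
      have h3 : q ≤ z + 1 := by omega
      simpa [h', h2, h3] using hstp q h'
    · have hq1 : q = z + 1 := by omega
      subst hq1
      have h3 : z + 1 ≤ z + 1 := le_rfl
      have h4 : ¬ (z + 1 + 1 ≤ z + 1) := by omega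
      simp only [h', h3, h4, if_true, if_false, if_neg, if_pos]
      rw [h1]
      exact ⟨ha, hb, hstep⟩

lemma eq_b0 {r s₀ s₁ : ℕ} {δ δ' : Fin n} (hδ' : (δ' : ℕ) = (δ : ℕ) + 1)
    (hs0r : s₀ ≤ r) {m : Fin n →₀ ℕ} (hm : Inv r s₀ s₁ δ m)
    (h1 : m δ = r - s₀) (h2 : m δ + m δ' = r) :
    m = Finsupp.single δ (r - s₀) + Finsupp.single δ' s₀ := by
  obtain ⟨hdm, hdeg, hlb, hub⟩ := hm
  have hδne : δ ≠ δ' := by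
    intro h; rw [h] at hδ'; omega
  have hrest : ∑ j ∈ Finset.univ \ ({δ, δ'} : Finset (Fin n)), m j = 0 := by
    have hsd := Finset.sum_sdiff (f := (m : Fin n → ℕ))
      (Finset.subset_univ ({δ, δ'} : Finset (Fin n)))
    rw [Finset.sum_pair hδne] at hsd
    have hmm : ∑ j, m j = mdeg m := rfl
    omega
  have hzero : ∀ j : Fin n, j ≠ δ → j ≠ δ' → m j = 0 := by
    intro j hj1 hj2
    have hjmem : j ∈ Finset.univ \ ({δ, δ'} : Finset (Fin n)) := by
      simp [hj1, hj2]
    exact (Finset.sum_eq_zero_iff.mp hrest) j hjmem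
  have hδ'v : m δ' = s₀ := by omega
  ext j
  simp only [Finsupp.add_apply, Finsupp.single_apply]
  by_cases hj1 : δ = j
  · subst hj1
    have : ¬ (δ' = δ) := fun h => hδne h.symm
    simp [this, h1]
  · by_cases hj2 : δ' = j
    · subst hj2
      simp [hj1, hδ'v]
    · have := hzero j (fun h => hj1 h.symm) (fun h => hj2 h.symm)
      simp [hj1, hj2, this]

lemma inv_b0 {r s₀ s₁ : ℕ} {δ δ' : Fin n} (hδ' : (δ' : ℕ) = (δ : ℕ) + 1)
    (hs0r : s₀ ≤ r) (h01 : s₀ ≤ s₁) :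
    Inv r s₀ s₁ δ (Finsupp.single δ (r - s₀) + Finsupp.single δ' s₀) := by
  have hδne : δ ≠ δ' := by intro h; rw [h] at hδ'; omega
  have hδ'δ : ¬ (δ' = δ) := fun h => hδne h.symm
  refine ⟨?_, ?_, ?_, ?_⟩
  · intro k hk
    have hk1 : ¬ (δ = k) := by
      intro h; subst h; exact absurd hk (lt_irrefl _)
    have hk2 : ¬ (δ' = k) := by
      intro h
      rw [← h] at hk
      have : (δ' : ℕ) < (δ : ℕ) := hk
      omega
    simp [Finsupp.add_apply, Finsupp.single_apply, hk1, hk2]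
  · rw [mdeg_add, mdeg_single, mdeg_single]; omega
  · simp [Finsupp.add_apply, Finsupp.single_apply, hδ'δ]; omega
  · simp [Finsupp.add_apply, Finsupp.single_apply, hδ'δ]

lemma key {r s₀ s₁ : ℕ} {δ δ' : Fin n} (hδ' : (δ' : ℕ) = (δ : ℕ) + 1)
    (h01 : s₀ ≤ s₁) (hs0r : s₀ ≤ r)
    (m : Fin n →₀ ℕ) (hm : Inv r s₀ s₁ δ m)
    (hne : m ≠ Finsupp.single δ (r - s₀) + Finsupp.single δ' s₀) :
    Reach r s₀ s₁ δ (Finsupp.single δ (r - s₀) + Finsupp.single δ' s₀) m := by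
  have hδne : δ ≠ δ' := by intro h; rw [h] at hδ'; omega
  suffices H : ∀ N (m : Fin n →₀ ℕ),
      (r - s₀ - m δ) + (r - m δ - m δ') ≤ N → Inv r s₀ s₁ δ m →
      m ≠ Finsupp.single δ (r - s₀) + Finsupp.single δ' s₀ →
      Reach r s₀ s₁ δ (Finsupp.single δ (r - s₀) + Finsupp.single δ' s₀) m by
    exact H _ m le_rfl hm hne
  intro N
  induction N with
  | zero =>
    intro m hμ hm hne
    obtain ⟨hdm, hdeg, hlb, hub⟩ := hm
    have hpair := pair_le m δ δ' hδne
    exact absurd (eq_b0 hδ' hs0r ⟨hdm, hdeg, hlb, hub⟩ (by omega) (by omega)) hne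
  | succ N ih =>
    intro m hμ hm hne
    obtain ⟨hdm, hdeg, hlb, hub⟩ := hm
    have hpair := pair_le m δ δ' hδne
    by_cases hA : m δ < r - s₀
    · -- move a unit to δ
      have hlt : m δ < mdeg m := by omega
      obtain ⟨k, hkδ, hkpos⟩ := exists_pos1 m δ hlt
      have hδk : δ < k := by
        rcases lt_trichotomy k δ with h | h | h
        · exact absurd (hdm k h) (by omega)
        · exact absurd h hkδ
        · exact h
      set m' := m + Finsupp.single δ 1 - Finsupp.single k 1 with hm'def
      have heq : Finsupp.single k 1 + m' = Finsupp.single δ 1 + m :=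
        swap_eq m k δ hkpos
      have hval : ∀ j, (if k = j then 1 else 0) + m' j
          = (if δ = j then 1 else 0) + m j := by
        intro j
        have := DFunLike.congr_fun heq j
        simpa [Finsupp.add_apply, Finsupp.single_apply] using this
      have hdeg' : mdeg m' = r := by
        have := congrArg mdeg heq
        rw [mdeg_add, mdeg_add, mdeg_single, mdeg_single] at this
        omega
      have hδval : m' δ = m δ + 1 := by
        have := hval δ
        have hkδ' : ¬ (k = δ) := hkδ
        simp [hkδ'] at this
        omega
      have hinv' : Inv r s₀ s₁ δ m' := by
        refine ⟨?_, hdeg', by omega, by omega⟩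
        intro j hj
        have := hval j
        have h1 : ¬ (k = j) := by
          intro h; subst h
          exact absurd (lt_trans hj hδk) (lt_irrefl _)
        have h2 : ¬ (δ = j) := by
          intro h; subst h; exact absurd hj (lt_irrefl _)
        have h3 := hdm j hj
        simp [h1, h2] at this
        omega
      have hμ' : (r - s₀ - m' δ) + (r - m' δ - m' δ') ≤ N := by
        have hvδ' := hval δ'
        have h2 : ¬ (δ = δ') := hδne
        by_cases hkk : k = δ'
        · subst hkk
          simp [h2] at hvδ'
          omega
        · have hkk' : ¬ (k = δ') := hkk
          simp [hkk', h2] at hvδ'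
          omega
      have hr : Reach r s₀ s₁ δ
          (Finsupp.single δ (r - s₀) + Finsupp.single δ' s₀) m' := by
        by_cases hb : m' = Finsupp.single δ (r - s₀) + Finsupp.single δ' s₀
        · rw [hb]; exact reach_refl (inv_b0 hδ' hs0r h01)
        · exact ih m' hμ' hinv' hb
      exact reach_extend hr ⟨hdm, hdeg, hlb, hub⟩ k δ (le_of_lt hδk) le_rfl heq
    · -- m δ = r - s₀; move a unit to δ'
      have hδeq : m δ = r - s₀ := by omega
      have hlt : m δ + m δ' < mdeg m := by
        rcases lt_or_eq_of_le hpair with h | h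
        · exact h
        · exact absurd (eq_b0 hδ' hs0r ⟨hdm, hdeg, hlb, hub⟩ hδeq (by omega)) hne
      obtain ⟨k, hkδ, hkδ', hkpos⟩ := exists_pos2 m δ δ' hδne hlt
      have hδk : δ < k := by
        rcases lt_trichotomy k δ with h | h | h
        · exact absurd (hdm k h) (by omega)
        · exact absurd h hkδ
        · exact h
      set m' := m + Finsupp.single δ' 1 - Finsupp.single k 1 with hm'def
      have heq : Finsupp.single k 1 + m' = Finsupp.single δ' 1 + m :=
        swap_eq m k δ' hkpos
      have hval : ∀ j, (if k = j then 1 else 0) + m' j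
          = (if δ' = j then 1 else 0) + m j := by
        intro j
        have := DFunLike.congr_fun heq j
        simpa [Finsupp.add_apply, Finsupp.single_apply] using this
      have hdeg' : mdeg m' = r := by
        have := congrArg mdeg heq
        rw [mdeg_add, mdeg_add, mdeg_single, mdeg_single] at this
        omega
      have hδval : m' δ = m δ := by
        have := hval δ
        have h1 : ¬ (k = δ) := hkδ
        have h2 : ¬ (δ' = δ) := fun h => hδne h.symm
        simp [h1, h2] at this
        omega
      have hδ'val : m' δ' = m δ' + 1 := by
        have := hval δ'
        have h1 : ¬ (k = δ') := hkδ'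
        simp [h1] at this
        omega
      have hinv' : Inv r s₀ s₁ δ m' := by
        refine ⟨?_, hdeg', by omega, by omega⟩
        intro j hj
        have := hval j
        have h1 : ¬ (k = j) := by
          intro h; subst h
          exact absurd (lt_trans hj hδk) (lt_irrefl _)
        have h2 : ¬ (δ' = j) := by
          intro h
          rw [← h] at hj
          have : (δ' : ℕ) < (δ : ℕ) := hj
          omega
        have h3 := hdm j hj
        simp [h1, h2] at this
        omega
      have hμ' : (r - s₀ - m' δ) + (r - m' δ - m' δ') ≤ N := by omega
      have hr : Reach r s₀ s₁ δ
          (Finsupp.single δ (r - s₀) + Finsupp.single δ' s₀) m' := by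
        by_cases hb : m' = Finsupp.single δ (r - s₀) + Finsupp.single δ' s₀
        · rw [hb]; exact reach_refl (inv_b0 hδ' hs0r h01)
        · exact ih m' hμ' hinv' hb
      have hδδ' : δ ≤ δ' := by
        have : (δ : ℕ) ≤ (δ' : ℕ) := by omega
        exact this
      exact reach_extend hr ⟨hdm, hdeg, hlb, hub⟩ k δ' (le_of_lt hδk) hδδ' heq

end Stmt4Aux

/-- across-the-street neighbor paths in `S′ = Seg(s₀..s₁)`. -/
theorem statement4 (n r s w : ℕ) (δ : Fin n) (hn : 2 ≤ n) (hr : 2 ≤ r) (hrs : r < s)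
    (hδ : (δ : ℕ) + 1 < n) (hw : w + 1 ≤ r)
    (s₀ s₁ : ℕ) (h01 : s₀ ≤ s₁) (h1w : s₁ ≤ w)
    (m : Fin n →₀ ℕ)
    (hmem : IsDeltaMon δ m ∧ mdeg m = r ∧ r - s₁ ≤ m δ ∧ m δ ≤ r - s₀)
    (hne : m ≠ Finsupp.single δ (r - s₀) +
      Finsupp.single (⟨(δ : ℕ) + 1, hδ⟩ : Fin n) s₀) :
    ∃ (z : ℕ) (c : ℕ → Fin n →₀ ℕ) (α β : ℕ → Fin n),
      c 0 = Finsupp.single δ (r - s₀) +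
        Finsupp.single (⟨(δ : ℕ) + 1, hδ⟩ : Fin n) s₀ ∧
      c (z + 1) = m ∧
      (∀ q ≤ z + 1, IsDeltaMon δ (c q) ∧ mdeg (c q) = r ∧
        r - s₁ ≤ c q δ ∧ c q δ ≤ r - s₀) ∧
      (∀ q ≤ z, δ ≤ α q ∧ δ ≤ β q ∧
        Finsupp.single (α q) 1 + c q = Finsupp.single (β q) 1 + c (q + 1)) := by
  have hs0r : s₀ ≤ r := by omega
  exact Stmt4Aux.key (δ' := (⟨(δ : ℕ) + 1, hδ⟩ : Fin n)) rfl h01 hs0r m hmem hne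
end
end

section
/- Let R be a commutative ring, let P₀, P′, P″ ∈ R[x_1,…,x_n], let u′, v′, u″, v″ ∈ ℕ^n, and let 1 ≤ α, β ≤ n. If X^{v′}·P′ = X^{u′}·P₀, X^{v″}·P″ = X^{u″}·P₀, and e_α + u′ + v″ = e_β + u″ + v′ in ℕ^n, then X_α·P′ = X_β·P″. (This is the algebraic content of the path-independence lemma: targets assigned along two different across-the-street neighbor paths from a common initial monomial are compatible.) -/
open MvPolynomial
open scoped Classical

noncomputable section

lemma mon_cancel {R : Type*} [CommRing R] {n : ℕ} (v : Fin n →₀ ℕ)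
    {P Q : MvPolynomial (Fin n) R}
    (h : monomial v (1 : R) * P = monomial v (1 : R) * Q) : P = Q := by
  ext m
  have := congrArg (coeff (v + m)) h
  simpa using this

/-- path-independence of target assignments (algebraic form). -/
theorem statement7 (R : Type*) [CommRing R] (n : ℕ)
    (P₀ P' P'' : MvPolynomial (Fin n) R)
    (u' v' u'' v'' : Fin n →₀ ℕ) (α β : Fin n)
    (h1 : monomial v' (1 : R) * P' = monomial u' (1 : R) * P₀)
    (h2 : monomial v'' (1 : R) * P'' = monomial u'' (1 : R) * P₀)
    (h3 : Finsupp.single α 1 + u' + v'' = Finsupp.single β 1 + u'' + v') :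
    X α * P' = X β * P'' := by
  apply mon_cancel (v' + v'')
  have hX : ∀ γ : Fin n, (X γ : MvPolynomial (Fin n) R) = monomial (Finsupp.single γ 1) 1 :=
    fun _ => rfl
  have mm : ∀ (a b : Fin n →₀ ℕ) (P : MvPolynomial (Fin n) R),
      monomial a (1 : R) * (monomial b 1 * P) = monomial (a + b) 1 * P := by
    intro a b P; rw [← mul_assoc, monomial_mul, one_mul]
  have key : monomial (Finsupp.single α 1 + u' + v'') (1 : R) * P₀ =
      monomial (Finsupp.single β 1 + u'' + v') (1 : R) * P₀ := by rw [h3]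
  calc monomial (v' + v'') (1 : R) * (X α * P')
      = monomial (Finsupp.single α 1 + v'') (1 : R) * (monomial v' 1 * P') := by
        rw [hX, mm, mm]; congr 1; abel
    _ = monomial (Finsupp.single α 1 + u' + v'') (1 : R) * P₀ := by
        rw [h1, mm]; congr 1; abel
    _ = monomial (Finsupp.single β 1 + u'' + v') (1 : R) * P₀ := key
    _ = monomial (Finsupp.single β 1 + v') (1 : R) * (monomial v'' 1 * P'') := by
        rw [h2, mm]; congr 1; abel
    _ = monomial (v' + v'') (1 : R) * (X β * P'') := by
        rw [hX, mm, mm]; congr 1; abel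
end
end

section
/- Let R be a commutative ring and let Υ : Seg_w → R[x_1,…,x_n] satisfy X^{b*}·Υ(b) = X^{b}·Υ(b*) for every b ∈ Seg_w. If b₁, b₂ ∈ Seg_w and m′₁, m′₂ are (δ+1)-monomials with 1 ≤ deg m′ᵢ ≤ s−r (i = 1, 2) such that m′₁ + b₁ = m′₂ + b₂, then X^{m′₁}·Υ(b₁) = X^{m′₂}·Υ(b₂). -/
open MvPolynomial
open scoped Classical

noncomputable section

/-- Multiplication by a monomial with coefficient 1 is injective. -/
theorem monomial_one_mul_cancel {n : ℕ} {R : Type*} [CommRing R] (a : Fin n →₀ ℕ)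
    {P Q : MvPolynomial (Fin n) R}
    (h : monomial a (1 : R) * P = monomial a 1 * Q) : P = Q := by
  ext m
  have := congrArg (coeff (a + m)) h
  simpa [coeff_monomial_mul] using this

/-- well-definedness of the Step-2 assignments (Lemma on `m′·b`). -/
theorem statement8 (R : Type*) [CommRing R] (n r s w : ℕ) (δ : Fin n)
    (hn : 2 ≤ n) (hr : 2 ≤ r) (hrs : r < s) (hδ : (δ : ℕ) + 1 < n) (hw : w + 1 ≤ r)
    (Ups : (Fin n →₀ ℕ) → MvPolynomial (Fin n) R)
    (hUps : ∀ b ∈ SegA r w δ,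
      monomial (bstar r w δ ⟨(δ : ℕ) + 1, hδ⟩) (1 : R) * Ups b =
        monomial b (1 : R) * Ups (bstar r w δ ⟨(δ : ℕ) + 1, hδ⟩))
    (b₁ b₂ m₁ m₂ : Fin n →₀ ℕ)
    (hb₁ : b₁ ∈ SegA r w δ) (hb₂ : b₂ ∈ SegA r w δ)
    (hm₁ : IsSuccDeltaMon δ m₁) (hm₂ : IsSuccDeltaMon δ m₂)
    (hd₁ : 1 ≤ mdeg m₁) (hd₁' : mdeg m₁ ≤ s - r)
    (hd₂ : 1 ≤ mdeg m₂) (hd₂' : mdeg m₂ ≤ s - r)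
    (heq : m₁ + b₁ = m₂ + b₂) :
    monomial m₁ (1 : R) * Ups b₁ = monomial m₂ (1 : R) * Ups b₂ := by
  set bs := bstar r w δ ⟨(δ : ℕ) + 1, hδ⟩ with hbs
  apply monomial_one_mul_cancel bs
  calc monomial bs (1 : R) * (monomial m₁ 1 * Ups b₁)
      = monomial m₁ 1 * (monomial bs 1 * Ups b₁) := by ring
    _ = monomial m₁ 1 * (monomial b₁ 1 * Ups bs) := by rw [hUps b₁ hb₁]
    _ = monomial (m₁ + b₁) 1 * Ups bs := by
        rw [← mul_assoc, monomial_mul, one_mul]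
    _ = monomial (m₂ + b₂) 1 * Ups bs := by rw [heq]
    _ = monomial m₂ 1 * (monomial b₂ 1 * Ups bs) := by
        rw [← mul_assoc, monomial_mul, one_mul]
    _ = monomial m₂ 1 * (monomial bs 1 * Ups b₂) := by rw [hUps b₂ hb₂]
    _ = monomial bs (1 : R) * (monomial m₂ 1 * Ups b₂) := by ring
end
end

section
/- Let R be a commutative ring and let Υ : S_D → R[x_1,…,x_n] satisfy: whenever m, m′ ∈ S_D and δ+1 ≤ α, β ≤ n with e_α + m = e_β + m′, then X_α·Υ(m) = X_β·Υ(m′). Suppose b, b′ ∈ S_D are connected by a path c₀ = b, c₁, …, c_z = b′ of elements of S_D with indices δ+1 ≤ α_i, β_i ≤ n satisfying e_{α_i} + c_{i−1} = e_{β_i} + c_i for 1 ≤ i ≤ z. Then (X_{α_1}·X_{α_2}⋯X_{α_z})·Υ(b) = (X_{β_1}·X_{β_2}⋯X_{β_z})·Υ(b′). -/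
open MvPolynomial
open scoped Classical

noncomputable section

/-- transport of targets along across-the-street paths in `S_D`. -/
theorem statement10 (R : Type*) [CommRing R] (n r s w : ℕ) (δ : Fin n)
    (hn : 2 ≤ n) (hr : 2 ≤ r) (hrs : r < s) (hδ : (δ : ℕ) + 1 < n) (hw : w + 1 ≤ r)
    (Ups : (Fin n →₀ ℕ) → MvPolynomial (Fin n) R)
    (hUps : ∀ m ∈ SD r s w δ, ∀ m' ∈ SD r s w δ, ∀ α β : Fin n, δ < α → δ < β →
      Finsupp.single α 1 + m = Finsupp.single β 1 + m' → X α * Ups m = X β * Ups m')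
    (z : ℕ) (c : ℕ → Fin n →₀ ℕ) (α β : ℕ → Fin n) (b b' : Fin n →₀ ℕ)
    (hc0 : c 0 = b) (hcz : c z = b')
    (hmem : ∀ i ≤ z, c i ∈ SD r s w δ)
    (hstep : ∀ i, 1 ≤ i → i ≤ z → δ < α i ∧ δ < β i ∧
      Finsupp.single (α i) 1 + c (i - 1) = Finsupp.single (β i) 1 + c i) :
    (∏ i ∈ Finset.Icc 1 z, X (α i)) * Ups b =
      (∏ i ∈ Finset.Icc 1 z, X (β i)) * Ups b' := by
  subst hc0 hcz
  induction z with
  | zero => simp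
  | succ z ih =>
    have hz : z ≤ z + 1 := Nat.le_succ z
    have ih' := ih (fun i hi => hmem i (hi.trans hz))
      (fun i h1 h2 => hstep i h1 (h2.trans hz))
    obtain ⟨hα, hβ, heq⟩ := hstep (z + 1) (Nat.le_add_left 1 z) le_rfl
    simp only [Nat.add_sub_cancel] at heq
    have key := hUps (c z) (hmem z hz) (c (z + 1)) (hmem (z + 1) le_rfl)
      (α (z + 1)) (β (z + 1)) hα hβ heq
    rw [Finset.prod_Icc_succ_top (Nat.le_add_left 1 z),
        Finset.prod_Icc_succ_top (Nat.le_add_left 1 z)]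
    calc (∏ i ∈ Finset.Icc 1 z, X (α i)) * X (α (z+1)) * Ups (c 0)
        = X (α (z+1)) * ((∏ i ∈ Finset.Icc 1 z, X (α i)) * Ups (c 0)) := by ring
      _ = X (α (z+1)) * ((∏ i ∈ Finset.Icc 1 z, X (β i)) * Ups (c z)) := by rw [ih']
      _ = (∏ i ∈ Finset.Icc 1 z, X (β i)) * (X (α (z+1)) * Ups (c z)) := by ring
      _ = (∏ i ∈ Finset.Icc 1 z, X (β i)) * (X (β (z+1)) * Ups (c (z+1))) := by rw [key]
      _ = (∏ i ∈ Finset.Icc 1 z, X (β i)) * X (β (z+1)) * Ups (c (z+1)) := by ring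
end
end

section
/- Let R be a commutative ring and let P₀ ∈ R[x_1,…,x_n] be supported in tar''. Then there exists a function Υ : S_L ∪ S_D → R[x_1,…,x_n] such that: Υ(b*) = P₀; Υ(b) is supported in tar' for every b ∈ S_L; Υ(b) is supported in tar for every b ∈ S_D; and, letting J be the ideal of R[x_1,…,x_n] generated by {X^m + Υ(m) : m ∈ S_D} together with {X^m : m ∈ ∂O and deg m = s+1}, the following holds: for all b₁, b₂ ∈ S_L ∪ S_D and all α, β ∈ {0, δ, δ+1, …, n} with at most one of α, β equal to 0 (where X₀ = 1 and e₀ = 0), if e_α + b₁ = e_β + b₂ then X_α·Υ(b₁) − X_β·Υ(b₂) ∈ J. -/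
open MvPolynomial
open scoped Classical

noncomputable section

/-! ### Auxiliary development for Statement 12 -/

namespace St12

variable {R : Type*} [CommRing R] {n : ℕ}

lemma mdeg_add (a b : Fin n →₀ ℕ) : mdeg (a + b) = mdeg a + mdeg b := by
  simp [mdeg, Finsupp.add_apply, Finset.sum_add_distrib]

lemma mdeg_single (i : Fin n) (k : ℕ) : mdeg (Finsupp.single i k) = k := by
  simp [mdeg, Finsupp.single_apply]

lemma isDeltaMon_add {δ : Fin n} {a b : Fin n →₀ ℕ} (ha : IsDeltaMon δ a)
    (hb : IsDeltaMon δ b) : IsDeltaMon δ (a + b) := by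
  intro k hk
  simp [Finsupp.add_apply, ha k hk, hb k hk]

lemma isDeltaMon_sub {δ : Fin n} {a : Fin n →₀ ℕ} (b : Fin n →₀ ℕ)
    (ha : IsDeltaMon δ a) : IsDeltaMon δ (a - b) := by
  intro k hk
  rw [Finsupp.tsub_apply, ha k hk]
  simp

section Params

variable (r s w : ℕ) (δ δ' : Fin n) (P₀ : MvPolynomial (Fin n) R)

lemma bstar_apply (i : Fin n) :
    bstar r w δ δ' i = (if δ = i then r - w else 0) + (if δ' = i then w else 0) := by
  rw [bstar, Finsupp.add_apply, Finsupp.single_apply, Finsupp.single_apply]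

lemma mdeg_bstar (hdd : δ ≠ δ') (hw : w ≤ r) : mdeg (bstar r w δ δ') = r := by
  rw [bstar, mdeg_add, mdeg_single, mdeg_single]
  omega

/-- The basic recursion, with fuel. -/
def phiA : ℕ → (Fin n →₀ ℕ) → MvPolynomial (Fin n) R
  | 0, u => if s < mdeg u then 0 else if u δ + w + 1 ≤ r then monomial u 1 else 0
  | (k+1), u => if s < mdeg u then 0 else if u δ + w + 1 ≤ r then monomial u 1 else
      - ∑ t ∈ P₀.support, coeff t P₀ • phiA k (t + u - bstar r w δ δ')

lemma phiA_big {u : Fin n →₀ ℕ} (k : ℕ) (h : s < mdeg u) :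
    phiA r s w δ δ' P₀ k u = 0 := by
  cases k <;> simp [phiA, h]

lemma phiA_base {u : Fin n →₀ ℕ} (k : ℕ) (h1 : ¬ s < mdeg u) (h2 : u δ + w + 1 ≤ r) :
    phiA r s w δ δ' P₀ k u = monomial u 1 := by
  cases k <;> simp [phiA, h1, h2]

lemma phiA_succ {u : Fin n →₀ ℕ} (k : ℕ) (h1 : ¬ s < mdeg u) (h2 : ¬ u δ + w + 1 ≤ r) :
    phiA r s w δ δ' P₀ (k+1) u =
      - ∑ t ∈ P₀.support, coeff t P₀ • phiA r s w δ δ' P₀ k (t + u - bstar r w δ δ') := by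
  simp [phiA, h1, h2]

/-- canonical fuel -/
def phiC (u : Fin n →₀ ℕ) : MvPolynomial (Fin n) R := phiA r s w δ δ' P₀ (u δ) u

def phiS (b : Fin n →₀ ℕ) : MvPolynomial (Fin n) R :=
  ∑ t ∈ P₀.support, coeff t P₀ • phiC r s w δ δ' P₀ (t + b - bstar r w δ δ')

def upsDef (m : Fin n →₀ ℕ) : MvPolynomial (Fin n) R :=
  if r + 1 ≤ mdeg m then phiS r s w δ δ' P₀ m
  else truncLE (s - 1) (phiS r s w δ δ' P₀ m)


lemma phiC_def (u : Fin n →₀ ℕ) :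
    phiC r s w δ δ' P₀ u = phiA r s w δ δ' P₀ (u δ) u := rfl

lemma X_mul_mono (a : Fin n) (u : Fin n →₀ ℕ) (c : R) :
    X a * monomial u c = monomial (Finsupp.single a 1 + u) c := by
  rw [X, monomial_mul, one_mul]

/-- The ideal `J`. -/
abbrev Jdl : Ideal (MvPolynomial (Fin n) R) :=
  Ideal.span
    ({Q | ∃ m ∈ SD r s w δ, Q = monomial m (1 : R) + upsDef r s w δ δ' P₀ m} ∪
     {Q | ∃ m ∈ Border r s w δ, mdeg m = s + 1 ∧
        Q = (monomial m (1 : R) : MvPolynomial (Fin n) R)})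

variable {r s w δ δ' P₀}
variable (hw : w + 1 ≤ r) (hrs : r < s) (hdd : δ ≠ δ')
  (hP : ∀ t ∈ P₀.support, IsDeltaMon δ t ∧ r ≤ mdeg t ∧ mdeg t + 1 ≤ s ∧
        t δ + w + 1 ≤ r ∧ w ≤ t δ')

section WithHyps
include hw hrs hdd hP

lemma dom {t u : Fin n →₀ ℕ} (ht : t ∈ P₀.support) (hu : r ≤ u δ + w) :
    bstar r w δ δ' ≤ t + u := by
  obtain ⟨_, _, _, _, htd'⟩ := hP t ht
  refine Finsupp.le_def.2 fun i => ?_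
  rw [bstar_apply r w δ δ' i, Finsupp.add_apply]
  by_cases h1 : δ = i <;> by_cases h2 : δ' = i
  · exact absurd (h1.trans h2.symm) hdd
  · obtain ⟨_, _, _, htd, _⟩ := hP t ht
    subst h1; simp [h2]; omega
  · subst h2; simp [h1]; omega
  · simp [h1, h2]

lemma sub_apply_delta {t u : Fin n →₀ ℕ} (ht : t ∈ P₀.support) :
    (t + u - bstar r w δ δ') δ = t δ + u δ - (r - w) := by
  rw [Finsupp.tsub_apply, Finsupp.add_apply, bstar_apply r w δ δ' δ,
    if_pos rfl, if_neg (by exact fun h => hdd h.symm), add_zero]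

lemma mdeg_sub {t u : Fin n →₀ ℕ} (ht : t ∈ P₀.support) (hu : r ≤ u δ + w) :
    mdeg (t + u - bstar r w δ δ') + r = mdeg t + mdeg u := by
  have h := tsub_add_cancel_of_le (dom hw hrs hdd hP ht hu)
  have := congrArg mdeg h
  rw [mdeg_add, mdeg_bstar r w δ δ' hdd (by omega), mdeg_add] at this
  omega

lemma isDeltaMon_shift {t u : Fin n →₀ ℕ} (ht : t ∈ P₀.support) (hu : IsDeltaMon δ u) :
    IsDeltaMon δ (t + u - bstar r w δ δ') :=
  isDeltaMon_sub _ (isDeltaMon_add (hP t ht).1 hu)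

lemma fuel_lt {t u : Fin n →₀ ℕ} (ht : t ∈ P₀.support) :
    (t + u - bstar r w δ δ') δ + 1 ≤ u δ ∨ u δ = 0 := by
  have h := sub_apply_delta hw hrs hdd hP (u := u) ht
  have := (hP t ht).2.2.2.1
  omega

lemma phiA_stab : ∀ k₁ k₂ (u : Fin n →₀ ℕ), u δ ≤ k₁ → u δ ≤ k₂ →
    phiA r s w δ δ' P₀ k₁ u = phiA r s w δ δ' P₀ k₂ u := by
  intro k₁
  induction k₁ with
  | zero =>
    intro k₂ u h1 h2
    by_cases hb : s < mdeg u
    · rw [phiA_big r s w δ δ' P₀ _ hb, phiA_big r s w δ δ' P₀ _ hb]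
    · have hbase : u δ + w + 1 ≤ r := by omega
      rw [phiA_base r s w δ δ' P₀ _ hb hbase, phiA_base r s w δ δ' P₀ _ hb hbase]
  | succ K ih =>
    intro k₂ u h1 h2
    by_cases hb : s < mdeg u
    · rw [phiA_big r s w δ δ' P₀ _ hb, phiA_big r s w δ δ' P₀ _ hb]
    by_cases hbase : u δ + w + 1 ≤ r
    · rw [phiA_base r s w δ δ' P₀ _ hb hbase, phiA_base r s w δ δ' P₀ _ hb hbase]
    have hd1 : 1 ≤ u δ := by omega
    obtain ⟨K₂, rfl⟩ : ∃ K₂, k₂ = K₂ + 1 := ⟨k₂ - 1, by omega⟩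
    rw [phiA_succ r s w δ δ' P₀ _ hb hbase, phiA_succ r s w δ δ' P₀ _ hb hbase]
    congr 1
    refine Finset.sum_congr rfl fun t ht => ?_
    congr 1
    have hf := fuel_lt hw hrs hdd hP (u := u) ht
    exact ih _ _ (by omega) (by omega)

lemma phiA_supp : ∀ k (u : Fin n →₀ ℕ), IsDeltaMon δ u → r ≤ mdeg u →
    ∀ v ∈ (phiA r s w δ δ' P₀ k u).support, v ∈ Tar r s w δ ∧ mdeg u ≤ mdeg v := by
  intro k
  induction k with
  | zero =>
    intro u hdm hru v hv
    by_cases hb : s < mdeg u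
    · rw [phiA_big r s w δ δ' P₀ _ hb] at hv; simp at hv
    by_cases hbase : u δ + w + 1 ≤ r
    · rw [phiA_base r s w δ δ' P₀ _ hb hbase] at hv
      rw [support_monomial] at hv
      split_ifs at hv with h10
      · simp at hv
      · rcases Finset.mem_singleton.1 hv with rfl
        exact ⟨⟨Or.inr ⟨hdm, hru, by omega, hbase⟩, hru, by omega⟩, le_refl _⟩
    · simp [phiA, hb, hbase] at hv
  | succ K ih =>
    intro u hdm hru v hv
    by_cases hb : s < mdeg u
    · rw [phiA_big r s w δ δ' P₀ _ hb] at hv; simp at hv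
    by_cases hbase : u δ + w + 1 ≤ r
    · rw [phiA_base r s w δ δ' P₀ _ hb hbase] at hv
      rw [support_monomial] at hv
      split_ifs at hv with h10
      · simp at hv
      · rcases Finset.mem_singleton.1 hv with rfl
        exact ⟨⟨Or.inr ⟨hdm, hru, by omega, hbase⟩, hru, by omega⟩, le_refl _⟩
    · rw [phiA_succ r s w δ δ' P₀ _ hb hbase, support_neg _] at hv
      obtain ⟨t, ht, hvt⟩ := Finset.mem_biUnion.1 (MvPolynomial.support_sum hv)
      have hvt' := MvPolynomial.support_smul hvt
      have hmd := mdeg_sub hw hrs hdd hP (u := u) ht (by omega)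
      have h1 := (hP t ht).2.1
      have := ih (t + u - bstar r w δ δ') (isDeltaMon_shift hw hrs hdd hP ht hdm)
        (by omega) v hvt'
      exact ⟨this.1, by omega⟩

end WithHyps


lemma border_mem (hrs : r < s) {v : Fin n →₀ ℕ} (hv : v ∈ OIdeal r s w δ)
    (hvs : mdeg v = s) (a : Fin n) (c : R) :
    monomial (Finsupp.single a 1 + v) c ∈ Jdl r s w δ δ' P₀ := by
  have hmd : mdeg (Finsupp.single a 1 + v) = s + 1 := by
    rw [mdeg_add, mdeg_single]; omega
  have h1 : (monomial (Finsupp.single a 1 + v) (1 : R)) ∈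
      ({Q | ∃ m ∈ SD r s w δ, Q = monomial m (1 : R) + upsDef r s w δ δ' P₀ m} ∪
       {Q | ∃ m ∈ Border r s w δ, mdeg m = s + 1 ∧
          Q = (monomial m (1 : R) : MvPolynomial (Fin n) R)}) := by
    refine Or.inr ⟨Finsupp.single a 1 + v, ⟨?_, a, v, hv, rfl⟩, hmd, rfl⟩
    intro hO
    rcases hO with hO | hO
    · omega
    · omega
  have h2 := Ideal.subset_span h1
  have h3 : monomial (Finsupp.single a 1 + v) c =
      C c * monomial (Finsupp.single a 1 + v) (1 : R) := by
    rw [C_mul_monomial, mul_one]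
  rw [h3]
  exact Ideal.mul_mem_left _ _ h2

lemma gen1_mem {m : Fin n →₀ ℕ} (hm : m ∈ SD r s w δ) :
    monomial m (1 : R) + upsDef r s w δ δ' P₀ m ∈ Jdl r s w δ δ' P₀ :=
  Ideal.subset_span (Or.inl ⟨m, hm, rfl⟩)

section WithHyps2
include hw hrs hdd hP

/-- The main compatibility lemma. -/
lemma ML : ∀ K (u : Fin n →₀ ℕ), u δ ≤ K → IsDeltaMon δ u → r ≤ mdeg u → ∀ a : Fin n,
    X a * phiC r s w δ δ' P₀ u - phiC r s w δ δ' P₀ (Finsupp.single a 1 + u) ∈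
      Jdl r s w δ δ' P₀ := by
  intro K
  induction K using Nat.strong_induction_on with
  | _ K ih =>
  intro u hK hdm hru a
  have hmv : mdeg (Finsupp.single a 1 + u) = 1 + mdeg u := by rw [mdeg_add, mdeg_single]
  have hvd : ((Finsupp.single a 1 + u : Fin n →₀ ℕ)) δ = (if a = δ then 1 else 0) + u δ := by
    rw [Finsupp.add_apply, Finsupp.single_apply]
  have hvd' : u δ ≤ ((Finsupp.single a 1 + u : Fin n →₀ ℕ)) δ ∧
      ((Finsupp.single a 1 + u : Fin n →₀ ℕ)) δ ≤ u δ + 1 := by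
    rw [hvd]; split <;> omega
  by_cases h1 : s < mdeg u
  · rw [phiC_def, phiA_big _ _ _ _ _ _ _ h1, phiC_def, phiA_big _ _ _ _ _ _ _ (by omega)]
    simpa using zero_mem _
  by_cases h2 : u δ + w + 1 ≤ r
  · rw [phiC_def, phiA_base _ _ _ _ _ _ _ h1 h2]
    by_cases h3 : mdeg u = s
    · rw [phiC_def, phiA_big _ _ _ _ _ _ _ (by omega), sub_zero, X_mul_mono]
      exact border_mem hrs (Or.inr ⟨hdm, hru, by omega, h2⟩) h3 a 1
    · by_cases h4 : ((Finsupp.single a 1 + u : Fin n →₀ ℕ)) δ + w + 1 ≤ r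
      · rw [phiC_def, phiA_base _ _ _ _ _ _ _ (by omega) h4, X_mul_mono, sub_self]
        exact zero_mem _
      · have ha : a = δ := by
          by_contra haa
          rw [hvd, if_neg haa] at h4; omega
        subst ha
        have hvδ : ((Finsupp.single a 1 + u : Fin n →₀ ℕ)) a = u a + 1 := by
          rw [hvd, if_pos rfl]; omega
        have huO : u ∈ OIdeal r s w a := Or.inr ⟨hdm, hru, by omega, h2⟩
        have hSD : (Finsupp.single a 1 + u) ∈ SD r s w a := by
          refine ⟨⟨?_, a, u, huO, rfl⟩, ?_, by omega, by omega⟩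
          · intro hO
            rcases hO with hO | hO
            · omega
            · omega
          · refine isDeltaMon_add ?_ hdm
            intro k hk
            rw [Finsupp.single_apply, if_neg (by exact fun h => absurd h (ne_of_gt hk))]
        rw [phiC_def, hvδ, phiA_succ _ _ _ _ _ _ _ (by omega) (by omega)]
        rw [sub_neg_eq_add, X_mul_mono]
        have heq : ∑ t ∈ P₀.support, coeff t P₀ •
            phiA r s w a δ' P₀ (u a) (t + (Finsupp.single a 1 + u) - bstar r w a δ') =
            upsDef r s w a δ' P₀ (Finsupp.single a 1 + u) := by
          rw [upsDef, if_pos (by omega)]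
          refine Finset.sum_congr rfl fun t ht => ?_
          congr 1
          refine phiA_stab hw hrs hdd hP _ _ _ ?_ ?_
          · have h5 := sub_apply_delta hw hrs hdd hP (u := Finsupp.single a 1 + u) ht
            have h6 := (hP t ht).2.2.2.1
            omega
          · exact le_refl _
        rw [heq]
        exact gen1_mem hSD
  · have h2' : r ≤ u δ + w := by omega
    have hd1 : 1 ≤ u δ := by omega
    by_cases h3 : mdeg u = s
    · rw [phiC_def (u := Finsupp.single a 1 + u), phiA_big _ _ _ _ _ _ _ (by omega), sub_zero]
      rw [← (phiC r s w δ δ' P₀ u).support_sum_monomial_coeff, Finset.mul_sum]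
      apply Submodule.sum_mem
      intro v' hv'
      rw [X_mul_mono]
      have hsupp := phiA_supp hw hrs hdd hP (u δ) u hdm hru v' hv'
      have hvs : mdeg v' = s := by
        have := hsupp.1.2.2
        omega
      exact border_mem hrs hsupp.1.1 hvs a _
    · have hvm : ¬ s < mdeg (Finsupp.single a 1 + u) := by omega
      have hvof : ¬ (((Finsupp.single a 1 + u : Fin n →₀ ℕ)) δ + w + 1 ≤ r) := by omega
      obtain ⟨k, hk'⟩ : ∃ k, u δ = k + 1 := ⟨u δ - 1, by omega⟩
      obtain ⟨k₂, hk₂⟩ : ∃ k₂, ((Finsupp.single a 1 + u : Fin n →₀ ℕ)) δ = k₂ + 1 :=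
        ⟨((Finsupp.single a 1 + u : Fin n →₀ ℕ)) δ - 1, by omega⟩
      rw [phiC_def, hk', phiA_succ _ _ _ _ _ _ _ h1 h2,
        phiC_def (u := Finsupp.single a 1 + u), hk₂, phiA_succ _ _ _ _ _ _ _ hvm hvof]
      rw [mul_neg, neg_sub_neg, Finset.mul_sum, ← Finset.sum_sub_distrib]
      apply Submodule.sum_mem
      intro t ht
      have hPt := hP t ht
      have harr : t + (Finsupp.single a 1 + u) - bstar r w δ δ' =
          Finsupp.single a 1 + (t + u - bstar r w δ δ') := by
        rw [add_left_comm t (Finsupp.single a 1) u,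
          add_tsub_assoc_of_le (dom hw hrs hdd hP ht h2') (Finsupp.single a 1)]
      have hfd := sub_apply_delta hw hrs hdd hP (u := u) ht
      have hfd2 : ((Finsupp.single a 1 + (t + u - bstar r w δ δ') : Fin n →₀ ℕ)) δ =
          (if a = δ then 1 else 0) + (t + u - bstar r w δ δ') δ := by
        rw [Finsupp.add_apply, Finsupp.single_apply]
      have he1 : phiA r s w δ δ' P₀ k (t + u - bstar r w δ δ') =
          phiC r s w δ δ' P₀ (t + u - bstar r w δ δ') :=
        phiA_stab hw hrs hdd hP _ _ _ (by omega) (le_refl _)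
      have he2 : phiA r s w δ δ' P₀ k₂ (Finsupp.single a 1 + (t + u - bstar r w δ δ')) =
          phiC r s w δ δ' P₀ (Finsupp.single a 1 + (t + u - bstar r w δ δ')) := by
        refine phiA_stab hw hrs hdd hP _ _ _ ?_ (le_refl _)
        rw [hfd2]
        rw [hvd] at hk₂
        split <;> split at hk₂ <;> omega
      rw [harr, he1, he2, mul_smul_comm, ← smul_sub, smul_eq_C_mul]
      apply Ideal.mul_mem_left
      have hmds := mdeg_sub hw hrs hdd hP (u := u) ht h2'
      have hrec := ih k (by omega) (t + u - bstar r w δ δ') (by omega)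
        (isDeltaMon_shift hw hrs hdd hP ht hdm) (by omega) a
      have := Submodule.neg_mem _ hrec
      rwa [neg_sub] at this

lemma phiS_supp {b : Fin n →₀ ℕ} (hbd : IsDeltaMon δ b) (hb : r ≤ b δ + w)
    (hmb : r ≤ mdeg b) :
    ∀ v ∈ (phiS r s w δ δ' P₀ b).support, v ∈ Tar r s w δ := by
  intro v hv
  obtain ⟨t, ht, hvt⟩ := Finset.mem_biUnion.1 (MvPolynomial.support_sum hv)
  have hmds := mdeg_sub hw hrs hdd hP (u := b) ht hb
  have h1 := (hP t ht).2.1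
  exact (phiA_supp hw hrs hdd hP _ _ (isDeltaMon_shift hw hrs hdd hP ht hbd)
    (by omega) v (MvPolynomial.support_smul hvt)).1

end WithHyps2

lemma coeff_truncLE (d : ℕ) (P : MvPolynomial (Fin n) R) (v : Fin n →₀ ℕ) :
    coeff v (truncLE d P) = if mdeg v ≤ d then coeff v P else 0 := by
  rw [truncLE, coeff_sum]
  simp only [coeff_monomial]
  rw [Finset.sum_ite_eq' (P.support.filter fun m => mdeg m ≤ d) v (fun m => coeff m P)]
  by_cases h2 : v ∈ P.support
  · simp [Finset.mem_filter, h2]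
  · rw [MvPolynomial.notMem_support_iff.1 h2]
    simp [Finset.mem_filter, h2]

lemma truncLE_eq_self (d : ℕ) (P : MvPolynomial (Fin n) R)
    (h : ∀ v ∈ P.support, mdeg v ≤ d) : truncLE d P = P := by
  apply MvPolynomial.ext
  intro v
  rw [coeff_truncLE]
  by_cases hv : v ∈ P.support
  · rw [if_pos (h v hv)]
  · rw [MvPolynomial.notMem_support_iff.1 hv]
    split <;> rfl

section WithHyps3
include hw hrs hdd hP

lemma highpart_mem {b : Fin n →₀ ℕ} (hbd : IsDeltaMon δ b) (hb : r ≤ b δ + w)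
    (hmb : r ≤ mdeg b) (a : Fin n) :
    X a * (phiS r s w δ δ' P₀ b - truncLE (s - 1) (phiS r s w δ δ' P₀ b)) ∈
      Jdl r s w δ δ' P₀ := by
  set D := phiS r s w δ δ' P₀ b - truncLE (s - 1) (phiS r s w δ δ' P₀ b) with hD
  rw [← D.support_sum_monomial_coeff, Finset.mul_sum]
  apply Submodule.sum_mem
  intro v hv
  have hcv : coeff v D ≠ 0 := MvPolynomial.mem_support_iff.1 hv
  have hcoeff : coeff v D = coeff v (phiS r s w δ δ' P₀ b) -
      (if mdeg v ≤ s - 1 then coeff v (phiS r s w δ δ' P₀ b) else 0) := by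
    rw [hD, coeff_sub, coeff_truncLE]
  have hnle : ¬ mdeg v ≤ s - 1 := by
    intro h
    rw [hcoeff, if_pos h, sub_self] at hcv
    exact hcv rfl
  have hvsupp : v ∈ (phiS r s w δ δ' P₀ b).support := by
    rw [MvPolynomial.mem_support_iff]
    intro h0
    rw [hcoeff, if_neg hnle, sub_zero, h0] at hcv
    exact hcv rfl
  have hTar := phiS_supp hw hrs hdd hP hbd hb hmb v hvsupp
  have hsdeg : mdeg v = s := by
    have := hTar.2.2
    omega
  rw [X_mul_mono]
  exact border_mem hrs hTar.1 hsdeg a _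

lemma bdelta_of_mem {b : Fin n →₀ ℕ} (hb : b ∈ SL r w δ ∪ SD r s w δ) :
    IsDeltaMon δ b ∧ r ≤ mdeg b ∧ mdeg b ≤ s ∧ r ≤ b δ + w := by
  rcases hb with ⟨hdm, hmb, hbδ⟩ | ⟨⟨hnotO, _⟩, hdm, hm1, hm2⟩
  · exact ⟨hdm, le_of_eq hmb.symm, by omega, by omega⟩
  · refine ⟨hdm, by omega, hm2, ?_⟩
    by_contra hlt
    exact hnotO (Or.inr ⟨hdm, by omega, hm2, by omega⟩)

lemma star {b : Fin n →₀ ℕ} (hb : b ∈ SL r w δ ∪ SD r s w δ) (α : Option (Fin n))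
    (hne : α = none → r + 1 ≤ mdeg b) :
    optX R α * upsDef r s w δ δ' P₀ b -
      (∑ t ∈ P₀.support, coeff t P₀ •
        phiC r s w δ δ' P₀ (t + (optE α + b) - bstar r w δ δ')) ∈ Jdl r s w δ δ' P₀ := by
  obtain ⟨hdm, hmb, hms, hbδ⟩ := bdelta_of_mem hw hrs hdd hP hb
  cases α with
  | none =>
    have h1 : r + 1 ≤ mdeg b := hne rfl
    rw [upsDef, if_pos h1]
    simp only [optX, optE, one_mul, zero_add]
    rw [phiS, sub_self]
    exact zero_mem _
  | some a =>
    simp only [optX, optE]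
    have hmain : X a * phiS r s w δ δ' P₀ b -
        (∑ t ∈ P₀.support, coeff t P₀ •
          phiC r s w δ δ' P₀ (t + (Finsupp.single a 1 + b) - bstar r w δ δ')) ∈
        Jdl r s w δ δ' P₀ := by
      rw [phiS, Finset.mul_sum, ← Finset.sum_sub_distrib]
      apply Submodule.sum_mem
      intro t ht
      have harr : t + (Finsupp.single a 1 + b) - bstar r w δ δ' =
          Finsupp.single a 1 + (t + b - bstar r w δ δ') := by
        rw [add_left_comm t (Finsupp.single a 1) b,
          add_tsub_assoc_of_le (dom hw hrs hdd hP ht hbδ) (Finsupp.single a 1)]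
      have hmds := mdeg_sub hw hrs hdd hP (u := b) ht hbδ
      have hmt := (hP t ht).2.1
      rw [harr, mul_smul_comm, ← smul_sub, smul_eq_C_mul]
      apply Ideal.mul_mem_left
      exact ML hw hrs hdd hP ((t + b - bstar r w δ δ') δ) _ (le_refl _)
        (isDeltaMon_shift hw hrs hdd hP ht hdm) (by omega) a
    by_cases hSD : r + 1 ≤ mdeg b
    · rw [upsDef, if_pos hSD]
      exact hmain
    · rw [upsDef, if_neg hSD]
      have hsplit : X a * truncLE (s - 1) (phiS r s w δ δ' P₀ b) -
          (∑ t ∈ P₀.support, coeff t P₀ •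
            phiC r s w δ δ' P₀ (t + (Finsupp.single a 1 + b) - bstar r w δ δ')) =
          (X a * phiS r s w δ δ' P₀ b -
            (∑ t ∈ P₀.support, coeff t P₀ •
              phiC r s w δ δ' P₀ (t + (Finsupp.single a 1 + b) - bstar r w δ δ'))) -
          X a * (phiS r s w δ δ' P₀ b - truncLE (s - 1) (phiS r s w δ δ' P₀ b)) := by
        ring
      rw [hsplit]
      exact Submodule.sub_mem _ hmain (highpart_mem hw hrs hdd hP hdm hbδ hmb a)

end WithHyps3

end Params

end St12


/-- existence of the full target assignment on `S_L ∪ S_D` with all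
S-polynomial compatibilities holding modulo the ideal `J`. -/
theorem statement12 (R : Type*) [CommRing R] (n r s w : ℕ) (δ : Fin n)
    (hn : 2 ≤ n) (hr : 2 ≤ r) (hrs : r < s) (hδ : (δ : ℕ) + 1 < n) (hw : w + 1 ≤ r)
    (P₀ : MvPolynomial (Fin n) R)
    (hP₀ : (P₀.support : Set (Fin n →₀ ℕ)) ⊆ Tar'' r s w δ ⟨(δ : ℕ) + 1, hδ⟩) :
    ∃ Ups : (Fin n →₀ ℕ) → MvPolynomial (Fin n) R,
      Ups (bstar r w δ ⟨(δ : ℕ) + 1, hδ⟩) = P₀ ∧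
      (∀ b ∈ SL r w δ, ((Ups b).support : Set (Fin n →₀ ℕ)) ⊆ Tar' r s w δ) ∧
      (∀ b ∈ SD r s w δ, ((Ups b).support : Set (Fin n →₀ ℕ)) ⊆ Tar r s w δ) ∧
      (∀ b₁ ∈ SL r w δ ∪ SD r s w δ, ∀ b₂ ∈ SL r w δ ∪ SD r s w δ,
        ∀ α β : Option (Fin n),
          (∀ a, α = some a → δ ≤ a) → (∀ a, β = some a → δ ≤ a) →
          ¬(α = none ∧ β = none) →
          optE α + b₁ = optE β + b₂ →
          optX R α * Ups b₁ - optX R β * Ups b₂ ∈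
            Ideal.span
              ({Q | ∃ m ∈ SD r s w δ, Q = monomial m (1 : R) + Ups m} ∪
               {Q | ∃ m ∈ Border r s w δ, mdeg m = s + 1 ∧
                  Q = (monomial m (1 : R) : MvPolynomial (Fin n) R)})) := by
  classical
  set δ' : Fin n := ⟨(δ : ℕ) + 1, hδ⟩ with hδ'def
  have hdd : δ ≠ δ' := by
    intro h
    have h2 := congrArg Fin.val h
    rw [hδ'def] at h2
    simp at h2
  have hP : ∀ t ∈ P₀.support, IsDeltaMon δ t ∧ r ≤ mdeg t ∧ mdeg t + 1 ≤ s ∧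
      t δ + w + 1 ≤ r ∧ w ≤ t δ' := by
    intro t ht
    obtain ⟨⟨⟨hO, h1, h2⟩, h3⟩, h4⟩ := hP₀ (Finset.mem_coe.2 ht)
    rcases hO with hO | hO
    · omega
    · exact ⟨hO.1, h1, by omega, hO.2.2.2, h4⟩
  refine ⟨St12.upsDef r s w δ δ' P₀, ?_, ?_, ?_, ?_⟩
  · -- value at bstar
    have hmb : mdeg (bstar r w δ δ') = r := St12.mdeg_bstar r w δ δ' hdd (by omega)
    rw [St12.upsDef, if_neg (by omega)]
    have hterm : ∀ t ∈ P₀.support,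
        coeff t P₀ • St12.phiC r s w δ δ' P₀ (t + bstar r w δ δ' - bstar r w δ δ') =
          monomial t (coeff t P₀) := by
      intro t ht
      obtain ⟨hdm, h1, h2, h3, h4⟩ := hP t ht
      rw [add_tsub_cancel_right]
      rw [St12.phiC_def, St12.phiA_base _ _ _ _ _ _ _ (by omega) h3]
      rw [MvPolynomial.smul_monomial, smul_eq_mul, mul_one]
    have hphiS : St12.phiS r s w δ δ' P₀ (bstar r w δ δ') = P₀ := by
      rw [St12.phiS, Finset.sum_congr rfl hterm, P₀.support_sum_monomial_coeff]
    rw [hphiS]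
    exact St12.truncLE_eq_self _ _ (fun v hv => by have := hP v hv; omega)
  · -- support over SL
    intro b hb v hv
    obtain ⟨hdm, hmb, hbδ⟩ := hb
    rw [St12.upsDef, if_neg (by omega)] at hv
    have hv' : v ∈ (truncLE (s - 1) (St12.phiS r s w δ δ' P₀ b)).support :=
      Finset.mem_coe.1 hv
    have hc := MvPolynomial.mem_support_iff.1 hv'
    rw [St12.coeff_truncLE] at hc
    by_cases hle : mdeg v ≤ s - 1
    · rw [if_pos hle] at hc
      have hvs : v ∈ (St12.phiS r s w δ δ' P₀ b).support :=
        MvPolynomial.mem_support_iff.2 hc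
      have hT := St12.phiS_supp hw hrs hdd hP hdm (by omega) (by omega) v hvs
      exact ⟨hT, hle⟩
    · rw [if_neg hle] at hc
      exact absurd rfl hc
  · -- support over SD
    intro b hb v hv
    have hfac := St12.bdelta_of_mem hw hrs hdd hP (Or.inr hb)
    rw [St12.upsDef, if_pos hb.2.2.1] at hv
    exact St12.phiS_supp hw hrs hdd hP hfac.1 hfac.2.2.2 hfac.2.1 v (Finset.mem_coe.1 hv)
  · -- compatibilities
    intro b₁ hb₁ b₂ hb₂ α β hα hβ hnn heq
    have hmdeg : ∀ b ∈ SL r w δ ∪ SD r s w δ, r ≤ mdeg b :=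
      fun b hb => (St12.bdelta_of_mem hw hrs hdd hP hb).2.1
    have key : ∀ (c₁ : Fin n →₀ ℕ), c₁ ∈ SL r w δ ∪ SD r s w δ →
        ∀ (c₂ : Fin n →₀ ℕ), c₂ ∈ SL r w δ ∪ SD r s w δ →
        ∀ (γ₁ γ₂ : Option (Fin n)), ¬(γ₁ = none ∧ γ₂ = none) →
        optE γ₁ + c₁ = optE γ₂ + c₂ → (γ₁ = none → r + 1 ≤ mdeg c₁) := by
      intro c₁ hc₁ c₂ hc₂ γ₁ γ₂ hnn' heq' h0
      subst h0
      cases γ₂ with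
      | none => exact absurd ⟨rfl, rfl⟩ hnn'
      | some a =>
        have hmd := congrArg mdeg heq'
        rw [St12.mdeg_add, St12.mdeg_add] at hmd
        have e1 : mdeg (optE (n := n) none) = 0 := by
          simp [optE, mdeg]
        have e2 : mdeg (optE (some a)) = 1 := by
          rw [show optE (some a) = Finsupp.single a 1 from rfl, St12.mdeg_single]
        have h2 := hmdeg c₂ hc₂
        rcases hc₁ with h | h
        · exfalso
          have h3 : mdeg c₁ = r := h.2.1
          omega
        · exact h.2.2.1
    have hne₁ : α = none → r + 1 ≤ mdeg b₁ := key b₁ hb₁ b₂ hb₂ α β hnn heq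
    have hne₂ : β = none → r + 1 ≤ mdeg b₂ :=
      key b₂ hb₂ b₁ hb₁ β α (fun h => hnn ⟨h.2, h.1⟩) heq.symm
    have h1 := St12.star hw hrs hdd hP hb₁ α hne₁
    have h2 := St12.star hw hrs hdd hP hb₂ β hne₂
    rw [heq] at h1
    have h3 := Submodule.sub_mem _ h1 h2
    rw [sub_sub_sub_cancel_right] at h3
    exact h3
end
end

section
/- Let R be a commutative ring and let I be an ideal of R[x_1,…,x_n]. Assume: (i) x_k^{s+1} ∈ I for every δ+1 ≤ k ≤ n; (ii) X^m ∈ I for every m ∈ ∂O with deg m = s+1; (iii) for every 1 ≤ k ≤ δ−1 there exists N_k ∈ R[x_1,…,x_n] supported in trailmon with x_k^r − N_k ∈ I; (iv) for every m ∈ S_D there exists P_m ∈ R[x_1,…,x_n] supported in tar, with every element of the support of P_m having degree at least deg m, such that X^m + P_m ∈ I; and (v) there exist N supported in trailmon and P supported in tar' such that x_δ^r − N + P ∈ I. Then for every 1 ≤ k ≤ n there exists an integer e_k ≥ 1 such that x_k^{e_k} ∈ I. -/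
open MvPolynomial
open scoped Classical

noncomputable section

/-!
Every variable after `x_δ` has a power in `I` by (i), and the relations (iii) express `x_k^r`,
`k < δ`, through monomials of degree `s`, which one more variable pushes into the border of
degree `s + 1`, hence into `I` by (ii). For `x_δ`, relation (v) leaves the term `x_δ^r · P` with
`P` supported in `tar`. Multiplying a monomial of `tar` by `x_δ` either stays in `O`, or lands in
`S_D` and is rewritten by (iv) into `tar` again with larger degree, or leaves `O` in degree
`s + 1`; since degrees never exceed `s` inside `tar`, `s + 1 - r` more factors `x_δ` put the whole
term into `I`.
-/

lemma mdeg_single_add {n : ℕ} (α : Fin n) (m : Fin n →₀ ℕ) :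
    mdeg (Finsupp.single α 1 + m) = mdeg m + 1 := by
  simp only [mdeg, ← Finsupp.degree_eq_sum, map_add, Finsupp.degree_single]
  omega

lemma mul_mem_of_forall_mul_monomial_mem {σ R : Type*} [CommRing R]
    {I : Ideal (MvPolynomial σ R)} {p q : MvPolynomial σ R}
    (h : ∀ m ∈ p.support, q * monomial m 1 ∈ I) : q * p ∈ I := by
  rw [p.as_sum, Finset.mul_sum]
  refine I.sum_mem fun m hm => ?_
  rw [← mul_one (coeff m p), ← C_mul_monomial, mul_left_comm]
  exact I.mul_mem_left _ (h m hm)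

section Reduction

variable {n : ℕ} {r s w : ℕ} {δ : Fin n}

lemma single_add_mem_border_of_mdeg_eq {t : Fin n →₀ ℕ} (ht : t ∈ OIdeal r s w δ)
    (hts : mdeg t = s) (hrs : r ≤ s + 1) (α : Fin n) :
    Finsupp.single α 1 + t ∈ Border r s w δ := by
  refine ⟨fun hO => ?_, α, t, ht, rfl⟩
  rcases hO with hO | hO <;> rw [mdeg_single_add] at hO <;> omega

variable {R : Type*} [CommRing R] {I : Ideal (MvPolynomial (Fin n) R)}

lemma X_mul_mem_of_support_subset_trail (hrs : r ≤ s + 1)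
    (hborder : ∀ m ∈ Border r s w δ, mdeg m = s + 1 →
      (monomial m (1 : R) : MvPolynomial (Fin n) R) ∈ I)
    (α : Fin n) {N : MvPolynomial (Fin n) R}
    (hN : (N.support : Set (Fin n →₀ ℕ)) ⊆ Trail r s w δ) : X α * N ∈ I := by
  refine mul_mem_of_forall_mul_monomial_mem fun m hm => ?_
  obtain ⟨hmO, hms⟩ := hN hm
  rw [← pow_one (X α), ← monomial_single_add]
  exact hborder _ (single_add_mem_border_of_mdeg_eq hmO hms hrs α) (by rw [mdeg_single_add, hms])

lemma exists_X_mul_monomial_sub_mem_of_mem_tar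
    (hborder : ∀ m ∈ Border r s w δ, mdeg m = s + 1 →
      (monomial m (1 : R) : MvPolynomial (Fin n) R) ∈ I)
    (hSD : ∀ m ∈ SD r s w δ, ∃ P : MvPolynomial (Fin n) R,
      (P.support : Set (Fin n →₀ ℕ)) ⊆ Tar r s w δ ∧
      (∀ m' ∈ P.support, mdeg m ≤ mdeg m') ∧
      monomial m (1 : R) + P ∈ I)
    {m : Fin n →₀ ℕ} (hm : m ∈ Tar r s w δ) :
    ∃ Q : MvPolynomial (Fin n) R, (Q.support : Set (Fin n →₀ ℕ)) ⊆ Tar r s w δ ∧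
      (∀ m' ∈ Q.support, mdeg m + 1 ≤ mdeg m') ∧ X δ * monomial m 1 - Q ∈ I := by
  obtain ⟨hmO, hrm, hms⟩ := hm
  rw [← pow_one (X δ), ← monomial_single_add]
  have hdeg := mdeg_single_add δ m
  by_cases hs : mdeg m = s
  · refine ⟨0, by simp, by simp, ?_⟩
    rw [sub_zero]
    exact hborder _ (single_add_mem_border_of_mdeg_eq hmO hs (by omega) δ) (by omega)
  by_cases hO : Finsupp.single δ 1 + m ∈ OIdeal r s w δ
  · refine ⟨monomial (Finsupp.single δ 1 + m) 1, ?_, ?_, by simp⟩ <;>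
      intro m' hm' <;> obtain rfl := Finset.mem_singleton.1 (support_monomial_subset hm')
    · exact ⟨hO, by omega, by omega⟩
    · omega
  have hδm : IsDeltaMon δ m := by
    rcases hmO with hmO | hmO
    · omega
    · exact hmO.1
  have hmem : Finsupp.single δ 1 + m ∈ SD r s w δ := by
    refine ⟨⟨hO, δ, m, hmO, rfl⟩, fun k hk => ?_, by omega, by omega⟩
    simp [Finsupp.single_eq_of_ne hk.ne, hδm k hk]
  obtain ⟨P, hPtar, hPdeg, hPI⟩ := hSD _ hmem
  refine ⟨-P, by simpa using hPtar, fun m' hm' => ?_, by simpa using hPI⟩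
  have := hPdeg m' (by simpa using hm')
  omega

lemma X_pow_mul_mem_of_support_subset_tar
    (hborder : ∀ m ∈ Border r s w δ, mdeg m = s + 1 →
      (monomial m (1 : R) : MvPolynomial (Fin n) R) ∈ I)
    (hSD : ∀ m ∈ SD r s w δ, ∃ P : MvPolynomial (Fin n) R,
      (P.support : Set (Fin n →₀ ℕ)) ⊆ Tar r s w δ ∧
      (∀ m' ∈ P.support, mdeg m ≤ mdeg m') ∧
      monomial m (1 : R) + P ∈ I)
    (j : ℕ) {Q : MvPolynomial (Fin n) R} (hQ : (Q.support : Set (Fin n →₀ ℕ)) ⊆ Tar r s w δ)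
    (hQdeg : ∀ m ∈ Q.support, s + 1 ≤ mdeg m + j) : X δ ^ j * Q ∈ I := by
  induction j generalizing Q with
  | zero =>
    have hQ0 : Q = 0 := by
      refine support_eq_empty.1 (Finset.eq_empty_of_forall_notMem fun m hm => ?_)
      have := (hQ hm).2.2
      have := hQdeg m hm
      omega
    simp [hQ0]
  | succ j ih =>
    refine mul_mem_of_forall_mul_monomial_mem fun m hm => ?_
    obtain ⟨Q', hQ'tar, hQ'deg, hQ'I⟩ :=
      exists_X_mul_monomial_sub_mem_of_mem_tar hborder hSD (hQ hm)
    have hQ'mem : X δ ^ j * Q' ∈ I :=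
      ih hQ'tar fun m' hm' => by have := hQ'deg m' hm'; have := hQdeg m hm; omega
    have hsplit : X δ ^ (j + 1) * monomial m 1 =
        X δ ^ j * (X δ * monomial m 1 - Q') + X δ ^ j * Q' := by ring
    rw [hsplit]
    exact I.add_mem (I.mul_mem_left _ hQ'I) hQ'mem

end Reduction

theorem statement15_general (R : Type*) [CommRing R] (n r s w : ℕ) (δ : Fin n)
    (hrs : r < s)
    (I : Ideal (MvPolynomial (Fin n) R))
    (h1 : ∀ k : Fin n, δ < k → (X k : MvPolynomial (Fin n) R) ^ (s + 1) ∈ I)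
    (h2 : ∀ m ∈ Border r s w δ, mdeg m = s + 1 →
      (monomial m (1 : R) : MvPolynomial (Fin n) R) ∈ I)
    (h3 : ∀ k : Fin n, k < δ → ∃ N : MvPolynomial (Fin n) R,
      (N.support : Set (Fin n →₀ ℕ)) ⊆ Trail r s w δ ∧ (X k) ^ r - N ∈ I)
    (h4 : ∀ m ∈ SD r s w δ, ∃ P : MvPolynomial (Fin n) R,
      (P.support : Set (Fin n →₀ ℕ)) ⊆ Tar r s w δ ∧
      (∀ m' ∈ P.support, mdeg m ≤ mdeg m') ∧
      monomial m (1 : R) + P ∈ I)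
    (h5 : ∃ N P : MvPolynomial (Fin n) R,
      (N.support : Set (Fin n →₀ ℕ)) ⊆ Trail r s w δ ∧
      (P.support : Set (Fin n →₀ ℕ)) ⊆ Tar' r s w δ ∧
      (X δ) ^ r - N + P ∈ I) :
    ∀ k : Fin n, ∃ e : ℕ, 1 ≤ e ∧ (X k : MvPolynomial (Fin n) R) ^ e ∈ I := by
  have hrs' : r ≤ s + 1 := by omega
  intro k
  rcases lt_trichotomy k δ with hk | rfl | hk
  · obtain ⟨N, hN, hNI⟩ := h3 k hk
    refine ⟨r + 1, by omega, ?_⟩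
    rw [pow_succ', ← sub_add_cancel (X k ^ r) N, mul_add]
    exact I.add_mem (I.mul_mem_left _ hNI) (X_mul_mem_of_support_subset_trail hrs' h2 k hN)
  · obtain ⟨N, P, hN, hP, hI⟩ := h5
    obtain ⟨j, rfl⟩ := Nat.exists_eq_add_of_lt hrs
    refine ⟨j + 2 + r, by omega, ?_⟩
    have hXN : X k ^ (j + 2) * N ∈ I := by
      rw [pow_succ, mul_assoc]
      exact I.mul_mem_left _ (X_mul_mem_of_support_subset_trail hrs' h2 k hN)
    have hXP : X k ^ (j + 2) * P ∈ I :=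
      X_pow_mul_mem_of_support_subset_tar h2 h4 (j + 2) (fun m hm => (hP hm).1)
        fun m hm => by have := (hP hm).1.2.1; omega
    have hsplit : (X k : MvPolynomial (Fin n) R) ^ (j + 2 + r) =
        X k ^ (j + 2) * (X k ^ r - N + P) + X k ^ (j + 2) * N - X k ^ (j + 2) * P := by ring
    rw [hsplit]
    exact I.sub_mem (I.add_mem (I.mul_mem_left _ hI) hXN) hXP
  · exact ⟨s + 1, by omega, h1 k hk⟩

/-- an ideal containing the listed elements contains a power of every
variable (so its zero locus is supported at the origin). -/
theorem statement15 (R : Type*) [CommRing R] (n r s w : ℕ) (δ : Fin n)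
    (hn : 2 ≤ n) (hr : 2 ≤ r) (hrs : r < s) (hδ : (δ : ℕ) + 1 < n) (hw : w + 1 ≤ r)
    (I : Ideal (MvPolynomial (Fin n) R))
    (h1 : ∀ k : Fin n, δ < k → (X k : MvPolynomial (Fin n) R) ^ (s + 1) ∈ I)
    (h2 : ∀ m ∈ Border r s w δ, mdeg m = s + 1 →
      (monomial m (1 : R) : MvPolynomial (Fin n) R) ∈ I)
    (h3 : ∀ k : Fin n, k < δ → ∃ N : MvPolynomial (Fin n) R,
      (N.support : Set (Fin n →₀ ℕ)) ⊆ Trail r s w δ ∧ (X k) ^ r - N ∈ I)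
    (h4 : ∀ m ∈ SD r s w δ, ∃ P : MvPolynomial (Fin n) R,
      (P.support : Set (Fin n →₀ ℕ)) ⊆ Tar r s w δ ∧
      (∀ m' ∈ P.support, mdeg m ≤ mdeg m') ∧
      monomial m (1 : R) + P ∈ I)
    (h5 : ∃ N P : MvPolynomial (Fin n) R,
      (N.support : Set (Fin n →₀ ℕ)) ⊆ Trail r s w δ ∧
      (P.support : Set (Fin n →₀ ℕ)) ⊆ Tar' r s w δ ∧
      (X δ) ^ r - N + P ∈ I) :
    ∀ k : Fin n, ∃ e : ℕ, 1 ≤ e ∧ (X k : MvPolynomial (Fin n) R) ^ e ∈ I :=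
  statement15_general R n r s w δ hrs I h1 h2 h3 h4 h5
end
end
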